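/- Let d ≥ 1, let x : Fin (d+4) → EuclideanSpace ℝ (Fin (d+1)) be injective with affineSpan ℝ (Set.range x) = ⊤, set P := convexHull ℝ (Set.range x), assume every x i is an extreme point of P, and assume P is simplicial: every proper face of P (a set F with IsExtreme ℝ P F and F ≠ P) equals convexHull ℝ (x '' S) for some finset S of Fin (d+4) for which the family of points (x i)_{i ∈ S} is affinely independent. Let y : Fin (d+4) → EuclideanSpace ℝ (Fin 2) be a Gale transform of x and let ŷ be the corresponding Gale diagram. Then ŷ i ≠ 0 for every i, and ŷ i ≠ -ŷ j for all i ≠ j (no two points of the Gale diagram are zero or lie at antipodal points of the unit circle). -/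

import Mathlib

/-!
A nonnegative linear dependence `v` of the Gale vectors (`∑ v i • y i = 0`, `v ≥ 0`) is
orthogonal to every affine dependence of the `x i`, hence is the restriction to the `x i` of an
affine function `f`. Since `f ≥ 0` on `P`, the vertices with `v i = 0` span a proper face of `P`,
which is a simplex. If the `y i` with `v i ≠ 0` lie on a line through the origin, a nonzero `α`
orthogonal to that line yields a nonzero affine dependence `(⟪α, y i⟫)ᵢ` supported on the vertices
of that simplex, which is absurd. A zero `y i`, or two antipodal points `ŷ i = -ŷ j`, would
produce exactly such a configuration.
-/

open scoped Classical

/-- `y` is a Gale transform of `x`: the linear evaluation map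
`α ↦ (⟪α, y i⟫)ᵢ` is injective and its range is the space of affine dependences
`K(x) = {λ | ∑ λ i • x i = 0 ∧ ∑ λ i = 0}`. -/
def IsGaleTransform {n d e : ℕ} (x : Fin n → EuclideanSpace ℝ (Fin d))
    (y : Fin n → EuclideanSpace ℝ (Fin e)) : Prop :=
  Function.Injective
    (fun (α : EuclideanSpace ℝ (Fin e)) (i : Fin n) => (inner ℝ α (y i) : ℝ)) ∧
  Set.range (fun (α : EuclideanSpace ℝ (Fin e)) (i : Fin n) => (inner ℝ α (y i) : ℝ)) =
    {l : Fin n → ℝ | ∑ i, l i • x i = 0 ∧ ∑ i, l i = 0}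

/-- The Gale diagram associated to a Gale transform `y`: each nonzero `y i` is
normalized to the unit sphere, and zero vectors are kept at the origin. -/
noncomputable def galeDiagram {n e : ℕ} (y : Fin n → EuclideanSpace ℝ (Fin e)) :
    Fin n → EuclideanSpace ℝ (Fin e) :=
  fun i => if y i = 0 then 0 else ‖y i‖⁻¹ • y i

open Set Finset

theorem exists_affineMap_comp_eq_of_forall_sum_mul_eq_zero {𝕜 E ι : Type*} [Field 𝕜]
    [AddCommGroup E] [Module 𝕜 E] [Fintype ι] {x : ι → E} {v : ι → 𝕜}
    (hv : ∀ l : ι → 𝕜, ∑ i, l i • x i = 0 → ∑ i, l i = 0 → ∑ i, l i * v i = 0) :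
    ∃ f : E →ᵃ[𝕜] 𝕜, f ∘ x = v := by
  -- `l ↦ ∑ l i * v i` kills the kernel of `T`, so it factors as `ψ ∘ T`.
  set T := Fintype.linearCombination 𝕜 fun i => (x i, (1 : 𝕜))
  have hvT : Fintype.linearCombination 𝕜 v ∈ (LinearMap.ker T).dualAnnihilator := by
    refine (Submodule.mem_dualAnnihilator _).2 fun l hl => ?_
    have hl' : ∑ i, l i • x i = 0 ∧ ∑ i, l i = 0 := by
      simpa only [T, LinearMap.mem_ker, Fintype.linearCombination_apply, Prod.smul_mk, smul_eq_mul,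
        mul_one, Prod.ext_iff, Prod.fst_sum, Prod.fst_zero, Prod.snd_sum, Prod.snd_zero] using hl
    simpa [Fintype.linearCombination_apply] using hv l hl'.1 hl'.2
  obtain ⟨ψ, hψ⟩ := (LinearMap.range_dualMap_eq_dualAnnihilator_ker T).ge hvT
  have hψx : ∀ i, ψ (x i, 1) = v i := fun i => by
    simpa [T, Fintype.linearCombination_apply, Pi.single_apply] using
      LinearMap.congr_fun hψ (Pi.single i 1)
  refine ⟨(ψ.comp (LinearMap.inl 𝕜 E 𝕜)).toAffineMap + AffineMap.const 𝕜 E (ψ (0, 1)), ?_⟩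
  ext i
  simp [← hψx, ← map_add]

theorem AffineMap.isExtreme_sep_eq_zero {E : Type*} [AddCommGroup E] [Module ℝ E]
    (f : E →ᵃ[ℝ] ℝ) {A : Set E} (hf : ∀ p ∈ A, 0 ≤ f p) :
    IsExtreme ℝ A {p ∈ A | f p = 0} := by
  refine ⟨sep_subset _ _, fun p₁ hp₁ p₂ hp₂ z hz hzs => ?_⟩
  obtain ⟨a, b, ha, hb, hab, rfl⟩ := hzs
  have hfz := hz.2
  rw [Convex.combo_affine_apply hab, smul_eq_mul, smul_eq_mul] at hfz
  exact ⟨hp₁, by nlinarith [hf p₁ hp₁, hf p₂ hp₂]⟩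

theorem AffineMap.convexHull_image_eq_sep {ι E : Type*} [AddCommGroup E] [Module ℝ E]
    (f : E →ᵃ[ℝ] ℝ) {x : ι → E} (hf : ∀ i, 0 ≤ f (x i)) :
    convexHull ℝ (x '' {i | f (x i) = 0}) = {p ∈ convexHull ℝ (range x) | f p = 0} := by
  refine Set.Subset.antisymm (subset_inter (convexHull_mono (image_subset_range _ _))
    (convexHull_min ?_ ((convex_singleton 0).affine_preimage f))) ?_
  · rintro _ ⟨i, hi, rfl⟩
    exact hi
  rintro _ ⟨hp, hfp⟩
  rw [convexHull_range_eq_exists_affineCombination] at hp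
  obtain ⟨s, w, hw₀, hw₁, rfl⟩ := hp
  have hterm : ∀ i ∈ s, w i * f (x i) = 0 := by
    refine (sum_eq_zero_iff_of_nonneg fun i hi => mul_nonneg (hw₀ i hi) (hf i)).1 ?_
    rwa [map_affineCombination _ _ _ hw₁, affineCombination_eq_linear_combination _ _ _ hw₁]
      at hfp
  rw [affineCombination_eq_centerMass hw₁, ← centerMass_filter_ne_zero]
  refine centerMass_mem_convexHull _ (fun i hi => hw₀ i (mem_filter.1 hi).1)
    (by rw [sum_filter_ne_zero, hw₁]; exact one_pos) fun i hi => ?_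
  obtain ⟨his, hwi⟩ := mem_filter.1 hi
  exact mem_image_of_mem x ((mul_eq_zero.1 (hterm i his)).resolve_left hwi)

theorem AffineMap.isExtreme_convexHull_image_eq_zero {ι E : Type*} [AddCommGroup E]
    [Module ℝ E] (f : E →ᵃ[ℝ] ℝ) {x : ι → E} (hf : ∀ i, 0 ≤ f (x i)) :
    IsExtreme ℝ (convexHull ℝ (range x)) (convexHull ℝ (x '' {i | f (x i) = 0})) := by
  rw [f.convexHull_image_eq_sep hf]
  exact f.isExtreme_sep_eq_zero fun p hp => convexHull_min (t := f ⁻¹' Ici 0)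
    (range_subset_iff.2 hf) ((convex_Ici 0).affine_preimage f) hp

theorem mem_of_mem_convexHull_image {ι E : Type*} [AddCommGroup E] [Module ℝ E] {x : ι → E}
    (hinj : Function.Injective x) (hext : ∀ i, x i ∈ (convexHull ℝ (range x)).extremePoints ℝ)
    {S : Set ι} {i : ι} (hi : x i ∈ convexHull ℝ (x '' S)) : i ∈ S := by
  have hiS := inter_extremePoints_subset_extremePoints_of_subset
    (convexHull_mono (image_subset_range x S)) ⟨hi, hext i⟩
  obtain ⟨j, hj, hji⟩ := extremePoints_convexHull_subset hiS
  rwa [← hinj hji]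

theorem AffineIndependent.eq_zero_of_sum_eq_zero_of_support_subset {ι E : Type*}
    [AddCommGroup E] [Module ℝ E] [Fintype ι] {x : ι → E} {S : Finset ι}
    (hS : AffineIndependent ℝ fun i : S => x i) {l : ι → ℝ} (hlx : ∑ i, l i • x i = 0)
    (hl : ∑ i, l i = 0) (hlS : ∀ i ∉ S, l i = 0) : l = 0 := by
  have h₀ : ∑ i : S, l i = 0 := by
    rwa [sum_coe_sort S l, sum_subset (subset_univ S) fun i _ hi => hlS i hi]
  have h₁ : ∑ i : S, l i • x i = 0 := by
    rwa [sum_coe_sort S (fun i => l i • x i),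
      sum_subset (subset_univ S) fun i _ hi => by rw [hlS i hi, zero_smul]]
  funext i
  by_cases hi : i ∈ S
  · exact hS.eq_zero_of_sum_eq_zero h₀ h₁ ⟨i, hi⟩ (mem_univ _)
  · exact hlS i hi

theorem exists_ne_zero_inner_eq_zero {F : Type*} [NormedAddCommGroup F] [InnerProductSpace ℝ F]
    [FiniteDimensional ℝ F] (hF : 2 ≤ Module.finrank ℝ F) (u : F) :
    ∃ α : F, α ≠ 0 ∧ inner ℝ α u = 0 := by
  have hspan : ℝ ∙ u ≠ ⊤ := fun h => by
    have hu := finrank_span_le_card (R := ℝ) ({u} : Set F)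
    rw [h, finrank_top, toFinset_singleton, Finset.card_singleton] at hu
    omega
  obtain ⟨α, hα, hα0⟩ := Submodule.exists_mem_ne_zero_of_ne_bot
    (mt Submodule.orthogonal_eq_bot_iff.1 hspan)
  exact ⟨α, hα0, Submodule.mem_orthogonal_singleton_iff_inner_left.1 hα⟩

def ProperFacesAreSimplices {ι E : Type*} [AddCommGroup E] [Module ℝ E] (x : ι → E) : Prop :=
  ∀ F : Set E, IsExtreme ℝ (convexHull ℝ (range x)) F → F ≠ convexHull ℝ (range x) →
    ∃ S : Finset ι, AffineIndependent ℝ (fun i : ↥S => x i) ∧ F = convexHull ℝ (x '' ↑S)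

namespace IsGaleTransform

variable {n d e : ℕ} {x : Fin n → EuclideanSpace ℝ (Fin d)} {y : Fin n → EuclideanSpace ℝ (Fin e)}

theorem exists_affineMap_comp_eq (hy : IsGaleTransform x y) {v : Fin n → ℝ}
    (hv : ∑ i, v i • y i = 0) : ∃ f : EuclideanSpace ℝ (Fin d) →ᵃ[ℝ] ℝ, f ∘ x = v := by
  refine exists_affineMap_comp_eq_of_forall_sum_mul_eq_zero fun l hlx hl => ?_
  obtain ⟨α, rfl⟩ := hy.2.ge (show l ∈ _ from ⟨hlx, hl⟩)
  simp only [mul_comm, ← real_inner_smul_right, ← inner_sum, hv, inner_zero_right]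

theorem eq_zero_of_forall_inner_eq_zero (hy : IsGaleTransform x y) (hinj : Function.Injective x)
    (hext : ∀ i, x i ∈ (convexHull ℝ (range x)).extremePoints ℝ)
    (hsimp : ProperFacesAreSimplices x) (v : Fin n → ℝ) (hv₀ : 0 ≤ v) (hv : v ≠ 0)
    (hvy : ∑ i, v i • y i = 0) {α : EuclideanSpace ℝ (Fin e)}
    (hα : ∀ i, v i ≠ 0 → inner ℝ α (y i) = 0) : α = 0 := by
  obtain ⟨f, rfl⟩ := hy.exists_affineMap_comp_eq hvy
  obtain ⟨i, hi⟩ := Function.ne_iff.1 hv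
  obtain ⟨S, hS, hFS⟩ := hsimp _ (f.isExtreme_convexHull_image_eq_zero fun i => hv₀ i)
    fun h => hi (mem_of_mem_convexHull_image hinj hext
      (h ▸ subset_convexHull ℝ _ (mem_range_self i)))
  have hZS : ∀ j, f (x j) = 0 → j ∈ S := fun j hj => mem_of_mem_convexHull_image hinj hext
    (hFS ▸ subset_convexHull ℝ _ (mem_image_of_mem x hj))
  obtain ⟨hlx, hl⟩ := hy.2.subset ⟨α, rfl⟩
  have hl0 := hS.eq_zero_of_sum_eq_zero_of_support_subset hlx hl fun j hj =>
    hα j fun h => hj (hZS j h)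
  exact hy.1 (hl0.trans (by ext; simp))

end IsGaleTransform

theorem galeDiagram_apply {n e : ℕ} (y : Fin n → EuclideanSpace ℝ (Fin e)) (i : Fin n) :
    galeDiagram y i = ‖y i‖⁻¹ • y i := by
  by_cases hi : y i = 0 <;> simp [galeDiagram, hi]

theorem norm_smul_galeDiagram {n e : ℕ} (y : Fin n → EuclideanSpace ℝ (Fin e)) (i : Fin n) :
    ‖y i‖ • galeDiagram y i = y i := by
  by_cases hi : y i = 0
  · simp [hi]
  · rw [galeDiagram_apply, smul_inv_smul₀ (norm_ne_zero_iff.2 hi)]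

theorem galeDiagram_eq_zero_iff {n e : ℕ} (y : Fin n → EuclideanSpace ℝ (Fin e)) (i : Fin n) :
    galeDiagram y i = 0 ↔ y i = 0 := by
  simp [galeDiagram_apply]

theorem stmt14_general {d : ℕ}
    (x : Fin (d + 4) → EuclideanSpace ℝ (Fin (d + 1)))
    (hinj : Function.Injective x)
    (hext : ∀ i, x i ∈ Set.extremePoints ℝ (convexHull ℝ (Set.range x)))
    (hsimp : ∀ F : Set (EuclideanSpace ℝ (Fin (d + 1))),
      IsExtreme ℝ (convexHull ℝ (Set.range x)) F → F ≠ convexHull ℝ (Set.range x) →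
      ∃ S : Finset (Fin (d + 4)),
        AffineIndependent ℝ (fun i : ↥S => x i) ∧ F = convexHull ℝ (x '' ↑S))
    (y : Fin (d + 4) → EuclideanSpace ℝ (Fin 2))
    (hy : IsGaleTransform x y) :
    (∀ i, galeDiagram y i ≠ 0) ∧
    (∀ i j, i ≠ j → galeDiagram y i ≠ -galeDiagram y j) := by
  have key := hy.eq_zero_of_forall_inner_eq_zero hinj hext hsimp
  have hrank : 2 ≤ Module.finrank ℝ (EuclideanSpace ℝ (Fin 2)) := by simp
  have hy₀ : ∀ i, y i ≠ 0 := fun i hi => by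
    obtain ⟨α, hα, hαi⟩ := exists_ne_zero_inner_eq_zero hrank (y i)
    refine hα (key (Pi.single i 1) (Pi.single_nonneg.2 zero_le_one) (by simp)
      (by simp [Pi.single_apply, hi]) fun k hk => ?_)
    rwa [show k = i by simpa [Pi.single_apply] using hk]
  refine ⟨fun i => (galeDiagram_eq_zero_iff y i).not.2 (hy₀ i), fun i j hij hji => ?_⟩
  obtain ⟨α, hα, hαi⟩ := exists_ne_zero_inner_eq_zero hrank (galeDiagram y i)
  have hαj : inner ℝ α (galeDiagram y j) = 0 := by
    rw [← neg_eq_iff_eq_neg.2 hji, inner_neg_right, hαi, neg_zero]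
  refine hα (key (Pi.single i ‖y i‖⁻¹ + Pi.single j ‖y j‖⁻¹)
    (add_nonneg (Pi.single_nonneg.2 (by positivity)) (Pi.single_nonneg.2 (by positivity)))
    (fun h => by simpa [hij, hy₀ i] using congr_fun h i)
    (by simp [add_smul, sum_add_distrib, Pi.single_apply, ← galeDiagram_apply, hji])
    fun k hk => ?_)
  have hkij : k = i ∨ k = j := by
    by_contra! h
    simp [h.1, h.2] at hk
  rw [← norm_smul_galeDiagram y k, real_inner_smul_right]
  rcases hkij with rfl | rfl <;> simp [hαi, hαj]

theorem stmt14 {d : ℕ} (hd : 1 ≤ d)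
    (x : Fin (d + 4) → EuclideanSpace ℝ (Fin (d + 1)))
    (hinj : Function.Injective x)
    (hx : affineSpan ℝ (Set.range x) = ⊤)
    (hext : ∀ i, x i ∈ Set.extremePoints ℝ (convexHull ℝ (Set.range x)))
    (hsimp : ∀ F : Set (EuclideanSpace ℝ (Fin (d + 1))),
      IsExtreme ℝ (convexHull ℝ (Set.range x)) F → F ≠ convexHull ℝ (Set.range x) →
      ∃ S : Finset (Fin (d + 4)),
        AffineIndependent ℝ (fun i : ↥S => x i) ∧ F = convexHull ℝ (x '' ↑S))
    (y : Fin (d + 4) → EuclideanSpace ℝ (Fin 2))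
    (hy : IsGaleTransform x y) :
    (∀ i, galeDiagram y i ≠ 0) ∧
    (∀ i j, i ≠ j → galeDiagram y i ≠ -galeDiagram y j) :=
  stmt14_general x hinj hext hsimp y hy
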